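/- arXiv:2112.14321 — 6 statements merged into one kernel-verified Lean document; each statement's English description precedes it below -/
import Mathlib

section
/- If √(1/x) = y(1+ν) with x, y > 0 and 0 < |ν| < 1, and ν̄ := (1 - x·y²)/2, then sign(ν̄) = sign(ν) and ν̄ < ν. -/
/-- The Newton residual `ν̄ = (1 - x y²)/2` has the same sign as `ν` and undershoots: `ν̄ < ν`. -/
theorem newton_residual_sign_and_undershoot (x y ν : ℝ) (hx : 0 < x) (hy : 0 < y)
    (hν : |ν| < 1) (hν0 : ν ≠ 0) (h : Real.sqrt (1 / x) = y * (1 + ν)) :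
    Real.sign ((1 - x * y ^ 2) / 2) = Real.sign ν ∧ (1 - x * y ^ 2) / 2 < ν := by
  obtain ⟨hν1, hν2⟩ := abs_lt.mp hν
  have h1ν : 0 < 1 + ν := by linarith
  have hinv : (0:ℝ) ≤ 1 / x := by positivity
  have key : x * y ^ 2 * (1 + ν) ^ 2 = 1 := by
    have h2 : 1 / x = (y * (1 + ν)) ^ 2 := by
      rw [← h, Real.sq_sqrt hinv]
    field_simp at h2
    nlinarith [h2]
  constructor
  · rcases lt_or_gt_of_ne hν0 with hneg | hpos
    · have hb : (1 - x * y ^ 2) / 2 < 0 := by nlinarith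
      rw [Real.sign_of_neg hb, Real.sign_of_neg hneg]
    · have hb : 0 < (1 - x * y ^ 2) / 2 := by nlinarith
      rw [Real.sign_of_pos hb, Real.sign_of_pos hpos]
  · have hν2p : (0:ℝ) < ν ^ 2 := by positivity
    have h3 : (0:ℝ) < ν ^ 2 * (3 + 2 * ν) := by nlinarith
    nlinarith [mul_pos h1ν h1ν, h3, key, sq_nonneg (1 + ν)]
end

section
/- For any real ν̄ with |ν̄| ≤ 1/4, setting ν' = ν̄(1 + (3/2)ν̄), if ν satisfies ν̄ = ν - ν²(3+2ν)/(2(1+ν)²) and |ν| ≤ 1/4, then |ν - ν'| ≤ C|ν|³ for an explicit constant C (e.g. C = 16). -/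
/-!
Clearing denominators, the compensation error is exactly
`ν³ (10 + 25/2 ν + 4ν²) / (4 (1 + ν)⁴)`: the first- and second-order terms cancel.
For `|ν| ≤ 1/4` the numerator factor is at most `107/8` and `(1 + ν)⁴ ≥ (3/4)⁴`,
which bounds the error by `11 |ν|³`.
-/

lemma sub_halley_compensation_eq {K : Type*} [Field K] [NeZero (2 : K)] {ν ν' : K}
    (hν : 1 + ν ≠ 0) (h : ν' = ν - ν ^ 2 * (3 + 2 * ν) / (2 * (1 + ν) ^ 2)) :
    ν - ν' * (1 + 3 / 2 * ν') = ν ^ 3 * (10 + 25 / 2 * ν + 4 * ν ^ 2) / (4 * (1 + ν) ^ 4) := by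
  have h4 : (4 : K) ≠ 0 := by
    rw [show (4 : K) = 2 * 2 by norm_num]
    exact mul_ne_zero two_ne_zero two_ne_zero
  subst h
  field_simp
  ring

section SmallArgument

variable {ν : ℝ}

lemma abs_halley_error_factor_le (hν : |ν| ≤ 1 / 4) :
    |10 + 25 / 2 * ν + 4 * ν ^ 2| ≤ 107 / 8 := by
  obtain ⟨hl, hr⟩ := abs_le.mp hν
  rw [abs_le]
  constructor <;> nlinarith

lemma one_add_pow_four_ge (hν : |ν| ≤ 1 / 4) : (3 / 4) ^ 4 ≤ (1 + ν) ^ 4 := by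
  have : 3 / 4 ≤ 1 + ν := by linarith [(abs_le.mp hν).1]
  gcongr

lemma abs_halley_error_le (hν : |ν| ≤ 1 / 4) :
    |ν ^ 3 * (10 + 25 / 2 * ν + 4 * ν ^ 2) / (4 * (1 + ν) ^ 4)| ≤ 11 * |ν| ^ 3 := by
  have hD : (0 : ℝ) < 4 * (1 + ν) ^ 4 := by linarith [one_add_pow_four_ge hν]
  rw [abs_div, abs_mul, abs_pow, abs_of_pos hD, div_le_iff₀ hD]
  calc |ν| ^ 3 * |10 + 25 / 2 * ν + 4 * ν ^ 2|
      ≤ |ν| ^ 3 * (107 / 8) := by gcongr; exact abs_halley_error_factor_le hν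
    _ ≤ 11 * |ν| ^ 3 * (4 * (3 / 4) ^ 4) := by linarith [pow_nonneg (abs_nonneg ν) 3]
    _ ≤ 11 * |ν| ^ 3 * (4 * (1 + ν) ^ 4) := by grw [one_add_pow_four_ge hν]

end SmallArgument

theorem halley_compensation_cubic_general (ν ν' : ℝ) (hν : |ν| ≤ 1 / 4)
    (h : ν' = ν - ν ^ 2 * (3 + 2 * ν) / (2 * (1 + ν) ^ 2)) :
    |ν - ν' * (1 + 3 / 2 * ν')| ≤ 16 * |ν| ^ 3 := by
  have hne : 1 + ν ≠ 0 := by linarith [(abs_le.mp hν).1]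
  rw [sub_halley_compensation_eq hne h]
  linarith [abs_halley_error_le hν, pow_nonneg (abs_nonneg ν) 3]

/-- Halley compensation error: if `ν̄ = ν - ν²(3+2ν)/(2(1+ν)²)`, `|ν̄| ≤ 1/4`, `|ν| ≤ 1/4`,
and `ν' = ν̄(1 + (3/2)ν̄)`, then `|ν - ν'| ≤ 16|ν|³`. -/
theorem halley_compensation_cubic (ν ν' : ℝ) (hν : |ν| ≤ 1 / 4)
    (hν' : |ν'| ≤ 1 / 4) (h : ν' = ν - ν ^ 2 * (3 + 2 * ν) / (2 * (1 + ν) ^ 2)) :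
    |ν - ν' * (1 + 3 / 2 * ν')| ≤ 16 * |ν| ^ 3 :=
  halley_compensation_cubic_general ν ν' hν h
end

section
/- If √(1/x) = y(1+ν) with x, y > 0 and |ν| < 1, then y + y·(1 - x y²)/2 = √(1/x) - y·ν²(3+2ν)/(2(1+ν)²). -/
/- Once `x y² (1+ν)² = 1`, clearing the denominator `2 (1+ν)²` reduces the claim to the
polynomial identity `3 (1+ν)² - 1 = 2 (1+ν)³ - ν² (3+2ν)`. -/
theorem newton_step_eq_of_mul_sq_eq_one {K : Type*} [Field K] [NeZero (2 : K)] {x y ν : K}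
    (hxy : x * (y * (1 + ν)) ^ 2 = 1) :
    y + y * ((1 - x * y ^ 2) / 2) =
      y * (1 + ν) - y * (ν ^ 2 * (3 + 2 * ν) / (2 * (1 + ν) ^ 2)) := by
  have hν : 1 + ν ≠ 0 := by
    rintro hν
    simp [hν] at hxy
  have hx : x * y ^ 2 = 1 / (1 + ν) ^ 2 := by
    rw [eq_div_iff (pow_ne_zero 2 hν)]
    linear_combination hxy
  rw [hx]
  field_simp
  ring

theorem newton_step_exact_expression_general (x y ν : ℝ) (hx : 0 < x)
    (h : Real.sqrt (1 / x) = y * (1 + ν)) :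
    y + y * ((1 - x * y ^ 2) / 2) =
      Real.sqrt (1 / x) - y * (ν ^ 2 * (3 + 2 * ν) / (2 * (1 + ν) ^ 2)) := by
  have hxy : x * (y * (1 + ν)) ^ 2 = 1 := by
    rw [← h, Real.sq_sqrt (by positivity), mul_one_div_cancel hx.ne']
  rw [h]
  exact newton_step_eq_of_mul_sq_eq_one hxy

/-- Exact expression of the Newton-step value:
`y + y(1 - x y²)/2 = √(1/x) - y·ν²(3+2ν)/(2(1+ν)²)`. -/
theorem newton_step_exact_expression (x y ν : ℝ) (hx : 0 < x) (hy : 0 < y)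
    (hν : |ν| < 1) (h : Real.sqrt (1 / x) = y * (1 + ν)) :
    y + y * ((1 - x * y ^ 2) / 2) =
      Real.sqrt (1 / x) - y * (ν ^ 2 * (3 + 2 * ν) / (2 * (1 + ν) ^ 2)) :=
  newton_step_exact_expression_general x y ν hx h
end

section
/- The square root of a positive radix-2 floating-point number is never the exact midpoint of two consecutive floating-point numbers: if x = m·2^e with m an odd integer (or more generally x a precision-p binary float), then √x cannot equal (a+b)/2 for consecutive precision-p binary floats a < b, unless √x is itself a float. -/
/-!
A midpoint of two floats is a dyadic rational `y = u · 2^k`, and we may take `u` odd. If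
`y² = u² · 2^(2k)` is a float `M · 2^E`, then comparing odd parts gives `u² ∣ M`, hence
`|u| ≤ |M| < 2^p` and `y` is itself a float.
-/

/-- The set of radix-2 floating-point numbers of precision `p`:
real numbers of the form `M · 2^E` with `M, E` integers and `|M| < 2^p`. -/
def Fp (p : ℕ) : Set ℝ := {x : ℝ | ∃ M E : ℤ, |M| < 2 ^ p ∧ x = (M : ℝ) * (2 : ℝ) ^ E}

/-- `b` is the successor of `a` in `Fp p`: they are consecutive floats. -/
def FpConsecutive (p : ℕ) (a b : ℝ) : Prop :=
  a ∈ Fp p ∧ b ∈ Fp p ∧ a < b ∧ ∀ f ∈ Fp p, ¬(a < f ∧ f < b)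

/-- `r` has a representation with an even significand at precision `p`. -/
def FpEven (p : ℕ) (r : ℝ) : Prop :=
  ∃ M E : ℤ, |M| < 2 ^ p ∧ 2 ∣ M ∧ r = (M : ℝ) * (2 : ℝ) ^ E

/-- `r` is a round-to-nearest, ties-to-even value of the real `x` at precision `p`. -/
def RNE (p : ℕ) (x r : ℝ) : Prop :=
  r ∈ Fp p ∧ (∀ f ∈ Fp p, |r - x| ≤ |f - x|) ∧
    ((∃ f ∈ Fp p, f ≠ r ∧ |f - x| = |r - x|) → FpEven p r)

def IsDyadic (y : ℝ) : Prop := ∃ N k : ℤ, y = N * 2 ^ k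

lemma int_mul_two_zpow_eq_of_le (N : ℤ) {m k : ℤ} (h : m ≤ k) :
    (N : ℝ) * 2 ^ k = ((N * 2 ^ (k - m).toNat : ℤ) : ℝ) * 2 ^ m := by
  push_cast
  rw [mul_assoc, ← zpow_natCast, ← zpow_add₀ two_ne_zero, Int.toNat_of_nonneg (by omega),
    sub_add_cancel]

lemma Int.dvd_of_odd_of_mul_two_zpow_eq {m n : ℤ} (hn : Odd n) {e f : ℤ}
    (h : (m : ℝ) * 2 ^ e = n * 2 ^ f) : n ∣ m := by
  rcases le_total f e with hfe | hef
  · rw [int_mul_two_zpow_eq_of_le m hfe] at h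
    have hmn : m * 2 ^ (e - f).toNat = n := by
      exact_mod_cast mul_right_cancel₀ (zpow_ne_zero f two_ne_zero) h
    exact (Int.isCoprime_two_right.mpr hn).pow_right.dvd_of_dvd_mul_right (dvd_of_eq hmn.symm)
  · rw [int_mul_two_zpow_eq_of_le n hef] at h
    have hmn : m = n * 2 ^ (f - e).toNat := by
      exact_mod_cast mul_right_cancel₀ (zpow_ne_zero e two_ne_zero) h
    exact ⟨_, hmn⟩

namespace IsDyadic

lemma of_mem_Fp {p : ℕ} {y : ℝ} (hy : y ∈ Fp p) : IsDyadic y :=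
  let ⟨M, E, _, h⟩ := hy
  ⟨M, E, h⟩

lemma add {y z : ℝ} (hy : IsDyadic y) (hz : IsDyadic z) : IsDyadic (y + z) := by
  obtain ⟨A, e, rfl⟩ := hy
  obtain ⟨B, f, rfl⟩ := hz
  refine ⟨A * 2 ^ (e - min e f).toNat + B * 2 ^ (f - min e f).toNat, min e f, ?_⟩
  rw [int_mul_two_zpow_eq_of_le A (min_le_left e f),
    int_mul_two_zpow_eq_of_le B (min_le_right e f)]
  push_cast
  ring

lemma div_two {y : ℝ} (hy : IsDyadic y) : IsDyadic (y / 2) := by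
  obtain ⟨N, k, rfl⟩ := hy
  exact ⟨N, k - 1, by rw [zpow_sub₀ two_ne_zero, zpow_one]; ring⟩

lemma exists_odd_mul_two_zpow {y : ℝ} (hy : IsDyadic y) (hy0 : y ≠ 0) :
    ∃ u k : ℤ, Odd u ∧ y = u * 2 ^ k := by
  obtain ⟨N, k, rfl⟩ := hy
  have hN0 : N ≠ 0 := by rintro rfl; simp at hy0
  obtain ⟨u, hN, hu⟩ :=
    (Int.finiteMultiplicity_iff (a := 2).mpr ⟨by decide, hN0⟩).exists_eq_pow_mul_and_not_dvd
  refine ⟨u, k + multiplicity 2 N, Int.not_even_iff_odd.mp (by rwa [even_iff_two_dvd]), ?_⟩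
  rw [zpow_add₀ two_ne_zero, zpow_natCast]
  nth_rw 1 [hN]
  push_cast
  ring

lemma mem_Fp_of_sq_mem_Fp {p : ℕ} {y : ℝ} (hy : IsDyadic y) (hsq : y ^ 2 ∈ Fp p) :
    y ∈ Fp p := by
  by_cases hy0 : y = 0
  · exact ⟨0, 0, by positivity, by simp [hy0]⟩
  obtain ⟨u, k, hu, rfl⟩ := hy.exists_odd_mul_two_zpow hy0
  obtain ⟨M, E, hM, hsqeq⟩ := hsq
  have hM0 : M ≠ 0 := by
    rintro rfl
    exact hy0 (pow_eq_zero_iff two_ne_zero |>.mp (by simpa using hsqeq))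
  have hdvd : u ^ 2 ∣ M := by
    refine Int.dvd_of_odd_of_mul_two_zpow_eq hu.pow (e := E) (f := 2 * k) ?_
    rw [← hsqeq, mul_pow, ← zpow_natCast (2 ^ k : ℝ), ← zpow_mul]
    push_cast
    ring_nf
  refine ⟨u, k, ?_, rfl⟩
  calc |u| ≤ |u ^ 2| := by rw [abs_pow]; exact Int.le_self_sq |u|
    _ ≤ |M| := Int.le_of_dvd (abs_pos.mpr hM0) ((abs_dvd_abs _ _).mpr hdvd)
    _ < 2 ^ p := hM

end IsDyadic

/-- The square root of a positive precision-`p` binary float is never the exact midpoint of two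
consecutive floats, unless it is itself a float. -/
theorem sqrt_not_midpoint (p : ℕ) (x : ℝ) (hx : x ∈ Fp p) (hxpos : 0 < x)
    (a b : ℝ) (hab : FpConsecutive p a b) (h : Real.sqrt x = (a + b) / 2) :
    Real.sqrt x ∈ Fp p := by
  obtain ⟨ha, hb, -⟩ := hab
  have hdyadic : IsDyadic (Real.sqrt x) :=
    h ▸ ((IsDyadic.of_mem_Fp ha).add (IsDyadic.of_mem_Fp hb)).div_two
  exact hdyadic.mem_Fp_of_sq_mem_Fp (by rwa [Real.sq_sqrt hxpos.le])
end

section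
/- If the computed Newton residual is ν̄(1+ε) and the final FMA step y_C = fl(y + y·ν̄(1+ε)) incurs a single rounding (1+δ₁) with |δ₁| ≤ u, and √(1/x) = y(1+ν) with |ν| ≤ c₁·u and |ε| ≤ u, then the relative error of y_C with respect to √(1/x) is at most u + C·u² for an explicit constant C depending on c₁. -/
/-!
Write `√(1/x) = y t` with `t = 1 + ν`. Then `x y² t² = 1`, so the residual is
`ν̄ = (t² - 1) / (2 t²)` and the unrounded compensated value divided by `√(1/x)` is
`g = (1 + ν̄ (1 + ε)) / t`. Newton's iteration is quadratically convergent: `g - 1` is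
`(ν (2 + ν) ε - ν² (3 + 2ν)) / (2 t³)`, which is `O(u²)` because both `ν` and `ε` are `O(u)`.
The final rounding then contributes `|(1 + δ₁) g - 1| ≤ u + (1 + u) |g - 1|`.
-/

lemma abs_one_add_mul_sub_one_le (δ g : ℝ) :
    |(1 + δ) * g - 1| ≤ |δ| + (1 + |δ|) * |g - 1| :=
  calc |(1 + δ) * g - 1| = |δ + (1 + δ) * (g - 1)| := by ring_nf
    _ ≤ |δ| + |1 + δ| * |g - 1| := by rw [← abs_mul]; exact abs_add_le _ _
    _ ≤ |δ| + (1 + |δ|) * |g - 1| := by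
        gcongr
        simpa using abs_add_le 1 δ

lemma residual_eq_of_sqrt_eq {x y t : ℝ} (hx : 0 < x) (ht : t ≠ 0)
    (h : √(1 / x) = y * t) : (1 - x * y ^ 2) / 2 = (t ^ 2 - 1) / (2 * t ^ 2) := by
  have hsq : (y * t) ^ 2 = 1 / x := h ▸ Real.sq_sqrt (by positivity)
  field_simp at hsq ⊢
  linear_combination -hsq

lemma newton_correction_sub_one (ν ε : ℝ) (hν : 1 + ν ≠ 0) :
    (1 + ((1 + ν) ^ 2 - 1) / (2 * (1 + ν) ^ 2) * (1 + ε)) / (1 + ν) - 1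
      = (ν * (2 + ν) * ε - ν ^ 2 * (3 + 2 * ν)) / (2 * (1 + ν) ^ 3) := by
  field_simp
  ring

lemma abs_newton_correction_sub_one_le {ν ε a e : ℝ} (hν : |ν| ≤ a) (ha : a ≤ 1 / 2)
    (hε : |ε| ≤ e) :
    |(1 + ((1 + ν) ^ 2 - 1) / (2 * (1 + ν) ^ 2) * (1 + ε)) / (1 + ν) - 1|
      ≤ 16 * a ^ 2 + 10 * a * e := by
  obtain ⟨hν₁, hν₂⟩ := abs_le.mp hν
  have ha₀ : 0 ≤ a := (abs_nonneg ν).trans hν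
  have he₀ : 0 ≤ e := (abs_nonneg ε).trans hε
  have hden : 1 / 4 ≤ 2 * (1 + ν) ^ 3 := by
    have : (1 / 2 : ℝ) ^ 3 ≤ (1 + ν) ^ 3 := by gcongr; linarith
    linarith
  have hlin : |ν * (2 + ν) * ε| ≤ a * (5 / 2) * e := by
    rw [abs_mul, abs_mul]
    gcongr
    rw [abs_le]; constructor <;> linarith
  have hquad : |ν ^ 2 * (3 + 2 * ν)| ≤ a ^ 2 * 4 := by
    rw [abs_mul, abs_pow]
    gcongr
    rw [abs_le]; constructor <;> linarith
  have hden₀ : 0 < 2 * (1 + ν) ^ 3 := by linarith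
  rw [newton_correction_sub_one ν ε (by linarith), abs_div, abs_of_pos hden₀, div_le_iff₀ hden₀]
  have hsum := (abs_sub _ _).trans (add_le_add hlin hquad)
  nlinarith [mul_le_mul_of_nonneg_left hden
    (by positivity : 0 ≤ 16 * a ^ 2 + 10 * a * e)]

/-- Weak rounding bound for the compensated Newton step: if the computed residual is
`ν̄(1+ε)` and the final FMA incurs a single rounding `(1+δ₁)`, with `|ν| ≤ c₁·u`,
`|ε| ≤ u`, `|δ₁| ≤ u`, then the relative error of `y_C` is at most `u + C·u²` for a
constant `C` depending only on `c₁`. -/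
theorem compensated_newton_weak_rounding (c₁ : ℝ) (hc₁ : 0 ≤ c₁) :
    ∃ C : ℝ, 0 < C ∧
      ∀ u x y ν ε δ₁ yC : ℝ,
        0 < u → c₁ * u ≤ 1 / 2 →
        0 < x → 0 < y →
        Real.sqrt (1 / x) = y * (1 + ν) →
        |ν| ≤ c₁ * u → |ε| ≤ u → |δ₁| ≤ u →
        yC = (y + y * ((1 - x * y ^ 2) / 2) * (1 + ε)) * (1 + δ₁) →
        |yC - Real.sqrt (1 / x)| / Real.sqrt (1 / x) ≤ u + C * u ^ 2 := by
  refine ⟨16 * c₁ ^ 2 + 18 * c₁ + 5, by positivity, ?_⟩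
  intro u x y ν ε δ₁ yC hu hcu hx hy hs hν hε hδ hyC
  set g := (1 + ((1 + ν) ^ 2 - 1) / (2 * (1 + ν) ^ 2) * (1 + ε)) / (1 + ν)
  have ht : 0 < 1 + ν := by linarith [neg_abs_le ν]
  have hs₀ : 0 < √(1 / x) := hs ▸ mul_pos hy ht
  have hrel : (yC - √(1 / x)) / √(1 / x) = (1 + δ₁) * g - 1 := by
    rw [hyC, hs, residual_eq_of_sqrt_eq hx ht.ne' hs]
    simp only [g]
    field_simp
  have hg := abs_newton_correction_sub_one_le hν hcu hε
  calc |yC - √(1 / x)| / √(1 / x) = |(1 + δ₁) * g - 1| := by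
        rw [← hrel, abs_div, abs_of_pos hs₀]
    _ ≤ |δ₁| + (1 + |δ₁|) * |g - 1| := abs_one_add_mul_sub_one_le δ₁ g
    _ ≤ u + (1 + u) * (16 * (c₁ * u) ^ 2 + 10 * (c₁ * u) * u) := by gcongr
    _ ≤ u + (16 * c₁ ^ 2 + 18 * c₁ + 5) * u ^ 2 := by
        nlinarith [mul_le_mul_of_nonneg_right hcu
          (by positivity : 0 ≤ (16 * c₁ + 10) * u ^ 2)]
end

section
/- Exactness of the residual σ: if r = fl(1/x) for x ∈ 𝔽 (so r = (1/x)(1+δ), |δ| ≤ u), then the quantity 1 - x·r satisfies |1 - x·r| ≤ u·(1+u), and 0.5 - (x/2)·r is representable exactly in 𝔽 (no rounding in the FMA fma(-x/2, r, 0.5)) provided no underflow/overflow occurs. -/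
/-!
Round-to-nearest has relative error at most `u = 2^-p`, so `|1 - x·r| ≤ u`. Writing
`x = M·2^E` and `r = N·2^F` with `|M|, |N| < 2^p`, the product `x·r` is an integer multiple of
`2^G`, `G = E + F`, and `x·r ≥ 1 - u ≥ 1/2` forces `G ≥ -2p`. Hence `1 - x·r` is an integer
multiple of `2^min(G, 0)` of absolute value at most `2^-p ≤ 2^(p + min(G, 0))`, i.e. it has a
`p`-bit significand; halving it keeps it in `Fp p`.
-/

theorem exists_zpow_eq_int_mul_zpow {a e : ℤ} (h : e ≤ a) :
    ∃ m : ℤ, (2 : ℝ) ^ a = m * 2 ^ e :=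
  ⟨2 ^ (a - e).toNat, by
    rw [Int.cast_pow, Int.cast_two, ← zpow_natCast, Int.toNat_of_nonneg (by omega),
      ← zpow_add₀ two_ne_zero, sub_add_cancel]⟩

theorem lt_add_of_zpow_le_int_mul_zpow {n : ℕ} {K : ℤ} (hK : |K| < 2 ^ n) {a G : ℤ}
    (h : (2 : ℝ) ^ a ≤ K * 2 ^ G) : a < n + G := by
  have hK' : (|K| : ℝ) < 2 ^ n := by exact_mod_cast hK
  refine (zpow_lt_zpow_iff_right₀ (one_lt_two : (1 : ℝ) < 2)).1 ?_
  calc (2 : ℝ) ^ a ≤ K * 2 ^ G := h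
    _ ≤ |(K : ℝ)| * 2 ^ G := by gcongr; exact le_abs_self _
    _ < 2 ^ n * 2 ^ G := by gcongr
    _ = 2 ^ ((n : ℤ) + G) := by rw [zpow_add₀ two_ne_zero, zpow_natCast]

namespace Fp

theorem int_mul_zpow_mem {p : ℕ} (hp : 1 ≤ p) {M : ℤ} (hM : |M| ≤ 2 ^ p) (E : ℤ) :
    (M : ℝ) * 2 ^ E ∈ Fp p := by
  rcases hM.lt_or_eq with hM | hM
  · exact ⟨M, E, hM, rfl⟩
  -- `|M| = 2^p` is even, so halve the significand and raise the exponent.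
  obtain ⟨M', rfl⟩ : (2 : ℤ) ∣ M :=
    (dvd_abs 2 M).mp (hM ▸ dvd_pow_self 2 (by omega))
  have hM' : |M'| = 2 ^ (p - 1) := by
    rw [abs_mul, abs_two, ← pow_sub_mul_pow 2 hp, pow_one] at hM
    omega
  refine ⟨M', E + 1, hM' ▸ pow_lt_pow_right₀ one_lt_two (by omega), ?_⟩
  push_cast
  rw [zpow_add_one₀ two_ne_zero]
  ring

theorem zpow_mul_mem {p : ℕ} {x : ℝ} (hx : x ∈ Fp p) (k : ℤ) : (2 : ℝ) ^ k * x ∈ Fp p := by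
  obtain ⟨M, E, hM, rfl⟩ := hx
  exact ⟨M, k + E, hM, by rw [zpow_add₀ two_ne_zero]; ring⟩

theorem mul_mem {p q : ℕ} {x y : ℝ} (hx : x ∈ Fp p) (hy : y ∈ Fp q) : x * y ∈ Fp (p + q) := by
  obtain ⟨M, E, hM, rfl⟩ := hx
  obtain ⟨N, F, hN, rfl⟩ := hy
  refine ⟨M * N, E + F, ?_, ?_⟩
  · rw [abs_mul, pow_add]
    exact mul_lt_mul'' hM hN (abs_nonneg _) (abs_nonneg _)
  · push_cast
    rw [zpow_add₀ two_ne_zero]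
    ring

theorem abs_sub_le_zpow_of_isNearest {p : ℕ} (hp : 1 ≤ p) {y r : ℝ}
    (hnear : ∀ f ∈ Fp p, |r - y| ≤ |f - y|) {e : ℤ} (hy : |y| ≤ 2 ^ ((p : ℤ) + e)) :
    |r - y| ≤ 2 ^ (e - 1) := by
  have he : (0 : ℝ) < 2 ^ e := by positivity
  set K := round (y / 2 ^ e)
  have hK : |y / 2 ^ e - K| ≤ 1 / 2 := abs_sub_round _
  have hKp : |K| ≤ 2 ^ p := by
    have hyK : |y / 2 ^ e| ≤ 2 ^ p := by
      rwa [abs_div, abs_of_pos he, div_le_iff₀ he, ← zpow_natCast, ← zpow_add₀ two_ne_zero]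
    have : |(K : ℝ)| < 2 ^ p + 1 := by
      linarith [abs_sub_abs_le_abs_sub (K : ℝ) (y / 2 ^ e), abs_sub_comm (K : ℝ) (y / 2 ^ e)]
    have : |K| < 2 ^ p + 1 := by exact_mod_cast this
    omega
  calc |r - y| ≤ |K * 2 ^ e - y| := hnear _ (int_mul_zpow_mem hp hKp e)
    _ = |y / 2 ^ e - K| * 2 ^ e := by
        rw [← abs_of_pos he, ← abs_mul, abs_of_pos he, abs_sub_comm, sub_mul, div_mul_cancel₀ _ he.ne']
    _ ≤ 1 / 2 * 2 ^ e := by gcongr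
    _ = 2 ^ (e - 1) := by rw [zpow_sub₀ two_ne_zero, zpow_one]; ring

theorem abs_sub_le_of_isNearest {p : ℕ} (hp : 1 ≤ p) {y r : ℝ}
    (hnear : ∀ f ∈ Fp p, |r - y| ≤ |f - y|) (hy : y ≠ 0) :
    |r - y| ≤ 2 ^ (-(p : ℤ)) * |y| := by
  set k := Int.log 2 |y|
  have hlow : (2 : ℝ) ^ k ≤ |y| := by
    exact_mod_cast Int.zpow_log_le_self one_lt_two (abs_pos.2 hy)
  have hup : |y| ≤ 2 ^ ((p : ℤ) + (k + 1 - p)) := by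
    rw [add_sub_cancel]
    exact_mod_cast (Int.lt_zpow_succ_log_self one_lt_two |y|).le
  calc |r - y| ≤ 2 ^ (k + 1 - p - 1) := abs_sub_le_zpow_of_isNearest hp hnear hup
    _ = 2 ^ (-(p : ℤ)) * 2 ^ k := by rw [← zpow_add₀ two_ne_zero]; ring_nf
    _ ≤ 2 ^ (-(p : ℤ)) * |y| := by gcongr

theorem one_sub_mem {p : ℕ} (hp : 1 ≤ p) {z : ℝ} (hz : z ∈ Fp (p + p))
    (hres : |1 - z| ≤ 2 ^ (-(p : ℤ))) : 1 - z ∈ Fp p := by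
  obtain ⟨K, G, hK, rfl⟩ := hz
  have hG : -((p : ℤ) + p) ≤ G := by
    have hu : (2 : ℝ) ^ (-(p : ℤ)) ≤ 2 ^ (-1 : ℤ) := zpow_le_zpow_right₀ one_le_two (by omega)
    have hz : (2 : ℝ) ^ (-1 : ℤ) ≤ K * 2 ^ G := calc
      (2 : ℝ) ^ (-1 : ℤ) = 1 - 2 ^ (-1 : ℤ) := by norm_num
      _ ≤ 1 - 2 ^ (-(p : ℤ)) := sub_le_sub_left hu 1
      _ ≤ K * 2 ^ G := sub_le_comm.1 (abs_le.1 hres).2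
    have := lt_add_of_zpow_le_int_mul_zpow hK hz
    push_cast at this
    omega
  set e := min G 0
  obtain ⟨m₁, hm₁⟩ := exists_zpow_eq_int_mul_zpow (min_le_right G 0)
  obtain ⟨m₂, hm₂⟩ := exists_zpow_eq_int_mul_zpow (min_le_left G 0)
  have hT : 1 - K * (2 : ℝ) ^ G = ((m₁ - K * m₂ : ℤ) : ℝ) * 2 ^ e := by
    rw [← zpow_zero (2 : ℝ), hm₁, hm₂]
    push_cast
    ring
  rw [hT] at hres ⊢
  apply int_mul_zpow_mem hp
  have he : (0 : ℝ) < 2 ^ e := by positivity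
  have : |((m₁ - K * m₂ : ℤ) : ℝ)| * 2 ^ e ≤ 2 ^ p * 2 ^ e := calc
    _ = |((m₁ - K * m₂ : ℤ) : ℝ) * 2 ^ e| := by rw [abs_mul, abs_of_pos he]
    _ ≤ 2 ^ (-(p : ℤ)) := hres
    _ ≤ 2 ^ ((p : ℤ) + e) := zpow_le_zpow_right₀ one_le_two (by omega)
    _ = 2 ^ p * 2 ^ e := by rw [zpow_add₀ two_ne_zero, zpow_natCast]
  exact_mod_cast le_of_mul_le_mul_right this he

end Fp

/-- Exactness of the residual `σ`: if `r` is the correctly rounded value of `1/x`, then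
`|1 - x·r| ≤ u(1+u)` and `0.5 - 0.5·x·r` is exactly representable in `Fp p`. -/
theorem division_residual_exact (p : ℕ) (hp : 1 ≤ p) (u : ℝ)
    (hu : u = (2 : ℝ) ^ (-(p : ℤ))) (x r : ℝ) (hx : x ∈ Fp p) (hxpos : 0 < x)
    (hr : r ∈ Fp p) (hnear : ∀ f ∈ Fp p, |r - 1 / x| ≤ |f - 1 / x|) :
    |1 - x * r| ≤ u * (1 + u) ∧ (0.5 - 0.5 * x * r) ∈ Fp p := by
  have hx0 : x ≠ 0 := hxpos.ne'
  have hres : |1 - x * r| ≤ u := by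
    have hrel := Fp.abs_sub_le_of_isNearest hp hnear (one_div_ne_zero hx0)
    calc |1 - x * r| = |x| * |r - 1 / x| := by
          rw [← abs_mul, mul_sub, mul_one_div_cancel hx0, abs_sub_comm]
      _ ≤ |x| * (2 ^ (-(p : ℤ)) * |1 / x|) := by gcongr
      _ = u := by rw [hu, mul_left_comm, ← abs_mul, mul_one_div_cancel hx0, abs_one, mul_one]
  have hu0 : 0 ≤ u := hu ▸ by positivity
  refine ⟨hres.trans (le_mul_of_one_le_right hu0 (by linarith)), ?_⟩
  have hσ : (0.5 : ℝ) - 0.5 * x * r = 2 ^ (-1 : ℤ) * (1 - x * r) := by norm_num; ring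
  rw [hσ]
  exact Fp.zpow_mul_mem (Fp.one_sub_mem hp (Fp.mul_mem hx hr) (hu ▸ hres)) _
end
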